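/- arXiv:1209.3933 — 5 statements merged into one kernel-verified Lean document; each statement's English description precedes it below -/
import Mathlib

section
/- Assume κ^{<κ} = κ. The collection Borel(κ), defined as the closure of the basic open sets of κ^κ under unions and intersections of size ≤ κ, is closed under complements. -/
open Cardinal Ordinal Set Topology
noncomputable section

/-- The generalized Baire space `κ^κ`, realized on the canonical type of order type `κ.ord`. -/
abbrev GBS (κ : Cardinal) : Type := κ.ord.ToType → κ.ord.ToType

/-- Basic open sets `N_η = {f | η ⊆ f}`, for `η` a function defined on an initial
segment `{i | i < b}` (these are exactly the ordinals `α < κ`). -/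
def GBaireBasic (κ : Cardinal) : Set (Set (GBS κ)) :=
  {N | ∃ (b : κ.ord.ToType) (η : κ.ord.ToType → κ.ord.ToType),
        N = {f : GBS κ | ∀ i, i < b → f i = η i}}

/-- The bounded topology on the generalized Baire space. -/
def gbTop (κ : Cardinal) : TopologicalSpace (GBS κ) :=
  TopologicalSpace.generateFrom (GBaireBasic κ)

/-- `Borel(κ)`: the closure of the basic open sets under unions and
intersections of size `≤ κ`. -/
inductive GBBorel (κ : Cardinal) : Set (GBS κ) → Prop
  | basic : ∀ N ∈ GBaireBasic κ, GBBorel κ N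
  | iUnion : ∀ (ι : Type) (A : ι → Set (GBS κ)), Cardinal.mk ι ≤ κ →
      (∀ i, GBBorel κ (A i)) → GBBorel κ (⋃ i, A i)
  | iInter : ∀ (ι : Type) (A : ι → Set (GBS κ)), Cardinal.mk ι ≤ κ →
      (∀ i, GBBorel κ (A i)) → GBBorel κ (⋂ i, A i)

/-!
The complement of a basic set `N_η`, with `η` defined below `b`, is the union of the sets `N_η'`
over the functions `η'` defined below `b` that differ from `η`; since `b < κ` there are at most
`κ^{<κ} = κ` of them. Complements of unions and intersections of `≤ κ` sets are intersections and
unions of their complements, so closure under complements follows by induction.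
-/

def Set.extendConst {α β : Type*} (s : Set α) (h : s → β) (d : β) : α → β :=
  Function.extend Subtype.val h fun _ => d

theorem Set.extendConst_apply {α β : Type*} (s : Set α) (h : s → β) (d : β) (i : s) :
    s.extendConst h d i = h i :=
  Subtype.val_injective.extend_apply _ _ _

theorem Set.compl_setOf_eqOn_eq_iUnion {α β : Type*} (s : Set α) (g : α → β) (d : β) :
    {f : α → β | EqOn f g s}ᶜ =
      ⋃ h : {h : s → β // h ≠ s.domRestrict g}, {f | EqOn f (s.extendConst h.1 d) s} := by
  ext f
  simp only [mem_compl_iff, mem_iUnion]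
  constructor
  · intro hfg
    refine ⟨⟨s.domRestrict f, fun hr => hfg fun i hi => congrFun hr ⟨i, hi⟩⟩, fun i hi => ?_⟩
    exact (s.extendConst_apply (s.domRestrict f) d ⟨i, hi⟩).symm
  · rintro ⟨⟨h, hne⟩, hf⟩ hfg
    refine hne (funext fun i => ?_)
    rw [← s.extendConst_apply h d i, ← hf i.2, hfg i.2]
    rfl

theorem Cardinal.mk_Iio_arrow_le_powerlt (κ : Cardinal) (b : κ.ord.ToType) :
    #(Iio b → κ.ord.ToType) ≤ κ ^< κ := by
  rw [mk_arrow, mk_ord_toType, lift_id, lift_id]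
  exact le_powerlt κ (by simpa using mk_Iio_lt b)

theorem GBBorel.compl_of_mem_basic {κ : Cardinal} (h : κ ^< κ = κ) {N : Set (GBS κ)}
    (hN : N ∈ GBaireBasic κ) : GBBorel κ Nᶜ := by
  obtain ⟨b, η, rfl⟩ := hN
  show GBBorel κ {f : GBS κ | EqOn f η (Iio b)}ᶜ
  rw [compl_setOf_eqOn_eq_iUnion (Iio b) η b]
  refine .iUnion _ _ ?_ fun η' => .basic _ ⟨b, _, rfl⟩
  exact ((mk_subtype_le _).trans (mk_Iio_arrow_le_powerlt κ b)).trans_eq h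

theorem stmt_2_general (κ : Cardinal) (h : κ ^< κ = κ) :
    ∀ A : Set (GBS κ), GBBorel κ A → GBBorel κ Aᶜ := by
  intro A hA
  induction hA with
  | basic N hN => exact GBBorel.compl_of_mem_basic h hN
  | iUnion ι A hι _ ih =>
    rw [compl_iUnion]
    exact .iInter ι _ hι ih
  | iInter ι A hι _ ih =>
    rw [compl_iInter]
    exact .iUnion ι _ hι ih

/-- `Borel(κ)` is closed under complements. -/
theorem stmt_2 (κ : Cardinal) (hκ : ℵ₀ ≤ κ) (h : κ ^< κ = κ) :
    ∀ A : Set (GBS κ), GBBorel κ A → GBBorel κ Aᶜ :=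
  stmt_2_general κ h
end
end

section
/- Assume κ^{<κ} = κ. Every Borel(κ) subset of κ^κ is Δ¹₁(κ); that is, both it and its complement are projections of closed subsets of κ^κ × κ^κ. -/
open Cardinal Ordinal Set Topology
noncomputable section

/-- `Σ¹₁(κ)`: projections of closed subsets of `κ^κ × κ^κ`. -/
def IsSigma11 (κ : Cardinal) (X : Set (GBS κ)) : Prop :=
  letI := gbTop κ
  ∃ C : Set (GBS κ × GBS κ), IsClosed C ∧ X = Prod.fst '' C

/-! `κ^{<κ} = κ` forces `κ` to be regular, since `κ < κ ^ cof κ` (König). Regularity makes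
every reindexing `g ↦ g ∘ m` continuous: the first `b` coordinates of `g ∘ m` only read
coordinates of `g` below some bound. Basic open sets are clopen, hence `Σ¹₁`, and `Σ¹₁` is closed
under unions and intersections of size `≤ κ`: a single point of `κ^κ` can code an index together
with a witness (via `Option κ ≃ κ`), or `κ` witnesses at once (via `κ × κ ≃ κ`). Induction on
`Borel(κ)`, with de Morgan's laws for the complements, gives the theorem. -/

open Function

local instance (κ : Cardinal) : TopologicalSpace (GBS κ) := gbTop κ

theorem Cardinal.isRegular_of_powerlt_self {κ : Cardinal} (hκ : ℵ₀ ≤ κ) (h : κ ^< κ = κ) :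
    κ.IsRegular :=
  ⟨hκ, le_of_not_gt fun hcof => ((lt_power_cof_ord hκ).trans_le (le_powerlt κ hcof)).ne h.symm⟩

theorem IsLocallyConstant.isClosed_setOf_mem {X ι : Type*} [TopologicalSpace X] {h : X → ι}
    (hh : IsLocallyConstant h) {s : ι → Set X} (hs : ∀ i, IsClosed (s i)) :
    IsClosed {x | x ∈ s (h x)} := by
  have : {x | x ∈ s (h x)}ᶜ = ⋃ i, h ⁻¹' {i} ∩ (s i)ᶜ := by ext x; simp
  exact isOpen_compl_iff.1 (this ▸ isOpen_iUnion fun i =>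
    (hh.isOpen_fiber i).inter (hs i).isOpen_compl)

section

variable {κ : Cardinal.{0}}

theorem Cardinal.IsRegular.exists_forall_lt (hκ : κ.IsRegular) (b : κ.ord.ToType)
    (m : κ.ord.ToType → κ.ord.ToType) : ∃ β, ∀ j < b, m j < β := by
  by_contra! hcofinal
  have hsmall : #(m '' Iio b) < Order.cof κ.ord.ToType := calc
    #(m '' Iio b) ≤ #(Iio b) := mk_image_le
    _ < #κ.ord.ToType := mk_Iio_lt b (by simp)
    _ ≤ Order.cof κ.ord.ToType := by simpa using hκ.le_cof_ord
  refine hsmall.not_ge (Order.cof_le fun β => ?_)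
  obtain ⟨j, hj, hβj⟩ := hcofinal β
  exact ⟨m j, mem_image_of_mem m hj, hβj⟩

theorem GBS.isOpen_of_forall_exists_cylinder_subset {S : Set (GBS κ)}
    (h : ∀ g ∈ S, ∃ b, {g' : GBS κ | ∀ i < b, g' i = g i} ⊆ S) : IsOpen S := by
  refine isOpen_iff_forall_mem_open.2 fun g hg => ?_
  obtain ⟨b, hb⟩ := h g hg
  exact ⟨_, hb, TopologicalSpace.isOpen_generateFrom_of_mem ⟨b, g, rfl⟩, fun i _ => rfl⟩

theorem GBS.isLocallyConstant_eval (hκ : ℵ₀ ≤ κ) (x : κ.ord.ToType) :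
    IsLocallyConstant fun g : GBS κ => g x := by
  have := Cardinal.noMaxOrder hκ
  refine IsLocallyConstant.iff_isOpen_fiber.2 fun a =>
    GBS.isOpen_of_forall_exists_cylinder_subset fun g hg => ?_
  obtain ⟨b, hxb⟩ := exists_gt x
  exact ⟨b, fun g' hg' => (hg' x hxb).trans hg⟩

theorem GBS.isClosed_of_mem_gBaireBasic (hκ : ℵ₀ ≤ κ) {N : Set (GBS κ)} (hN : N ∈ GBaireBasic κ) :
    IsClosed N := by
  obtain ⟨b, η, rfl⟩ := hN
  simp only [ofPred_forall]
  exact isClosed_iInter fun i => isClosed_iInter fun _ =>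
    (GBS.isLocallyConstant_eval hκ i).isClosed_fiber (η i)

theorem Cardinal.IsRegular.continuous_comp_right (hκ : κ.IsRegular)
    (m : κ.ord.ToType → κ.ord.ToType) : Continuous fun g : GBS κ => g ∘ m := by
  refine continuous_generateFrom_iff.2 ?_
  rintro _ ⟨b, η, rfl⟩
  refine GBS.isOpen_of_forall_exists_cylinder_subset fun g hg => ?_
  obtain ⟨β, hβ⟩ := hκ.exists_forall_lt b m
  exact ⟨β, fun g' hg' i hi => (hg' (m i) (hβ i hi)).trans (hg i hi)⟩

theorem IsSigma11.of_isClosed {X : Set (GBS κ)} (hX : IsClosed X) : IsSigma11 κ X :=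
  ⟨X ×ˢ Set.univ, hX.prod isClosed_univ, (fst_image_prod X ⟨id, mem_univ _⟩).symm⟩

theorem IsSigma11.iUnion_toType (hκ : κ.IsRegular) {A : κ.ord.ToType → Set (GBS κ)}
    (hA : ∀ a, IsSigma11 κ (A a)) : IsSigma11 κ (⋃ a, A a) := by
  choose D hDc hDe using hA
  obtain ⟨e⟩ : Nonempty (Option κ.ord.ToType ≃ κ.ord.ToType) := by
    rw [← Cardinal.eq, mk_option, mk_ord_toType, add_one_eq hκ.aleph0_le]
  -- `split g = (g (e none), g ∘ e ∘ some)`: an index together with a witness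
  let split : GBS κ ≃ κ.ord.ToType × GBS κ :=
    (e.arrowCongr (Equiv.refl _)).symm.trans Equiv.piOptionEquivProd
  have hsplit₁ : IsLocallyConstant fun g => (split g).1 :=
    GBS.isLocallyConstant_eval hκ.aleph0_le (e none)
  have hsplit₂ : Continuous fun g => (split g).2 := hκ.continuous_comp_right (e ∘ some)
  refine ⟨{p | (p.1, (split p.2).2) ∈ D (split p.2).1}, ?_, ?_⟩
  · exact (hsplit₁.comp_continuous continuous_snd).isClosed_setOf_mem fun a =>
      (hDc a).preimage (continuous_fst.prodMk (hsplit₂.comp continuous_snd))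
  · ext f
    simp only [mem_iUnion, hDe, mem_image, Prod.exists, mem_ofPred_eq, exists_and_right,
      exists_eq_right]
    simpa [exists_comm (α := GBS κ)] using
      split.surjective.exists (p := fun q => (f, q.2) ∈ D q.1)

theorem IsSigma11.iInter_toType (hκ : κ.IsRegular) {A : κ.ord.ToType → Set (GBS κ)}
    (hA : ∀ a, IsSigma11 κ (A a)) : IsSigma11 κ (⋂ a, A a) := by
  choose D hDc hDe using hA
  obtain ⟨P⟩ : Nonempty (κ.ord.ToType × κ.ord.ToType ≃ κ.ord.ToType) := by
    rw [← Cardinal.eq, mk_prod, Cardinal.lift_id, mk_ord_toType, mul_eq_self hκ.aleph0_le]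
  -- `slices g a = g ∘ P (a, ·)`: one witness for each `a`
  let slices : GBS κ ≃ (κ.ord.ToType → GBS κ) :=
    (P.arrowCongr (Equiv.refl _)).symm.trans (Equiv.curry _ _ _)
  have hslices : ∀ a, Continuous fun g => slices g a := fun a =>
    hκ.continuous_comp_right fun j => P (a, j)
  refine ⟨⋂ a, (fun p => (p.1, slices p.2 a)) ⁻¹' D a, isClosed_iInter fun a =>
    (hDc a).preimage (continuous_fst.prodMk ((hslices a).comp continuous_snd)), ?_⟩
  ext f
  simp only [mem_iInter, hDe, mem_image, Prod.exists, mem_preimage, exists_and_right,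
    exists_eq_right]
  rw [Classical.skolem, slices.surjective.exists]

theorem Cardinal.exists_surjective_ord_toType {ι : Type} [Nonempty ι] (hι : #ι ≤ κ) :
    ∃ s : κ.ord.ToType → ι, Surjective s := by
  obtain ⟨e⟩ : Nonempty (ι ↪ κ.ord.ToType) := by rwa [← le_def, mk_ord_toType]
  exact ⟨invFun e, invFun_surjective e.injective⟩

theorem IsSigma11.iUnion (hκ : κ.IsRegular) {ι : Type} (hι : #ι ≤ κ) {A : ι → Set (GBS κ)}
    (hA : ∀ i, IsSigma11 κ (A i)) : IsSigma11 κ (⋃ i, A i) := by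
  cases isEmpty_or_nonempty ι
  · simpa using IsSigma11.of_isClosed (κ := κ) isClosed_empty
  obtain ⟨s, hs⟩ := Cardinal.exists_surjective_ord_toType hι
  rw [← hs.iUnion_comp]
  exact .iUnion_toType hκ fun a => hA (s a)

theorem IsSigma11.iInter (hκ : κ.IsRegular) {ι : Type} (hι : #ι ≤ κ) {A : ι → Set (GBS κ)}
    (hA : ∀ i, IsSigma11 κ (A i)) : IsSigma11 κ (⋂ i, A i) := by
  cases isEmpty_or_nonempty ι
  · simpa using IsSigma11.of_isClosed (κ := κ) isClosed_univ
  obtain ⟨s, hs⟩ := Cardinal.exists_surjective_ord_toType hι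
  rw [← hs.iInter_comp]
  exact .iInter_toType hκ fun a => hA (s a)

end

/-- Every `Borel(κ)` set is `Δ¹₁(κ)`: both it and its complement are
projections of closed subsets of `κ^κ × κ^κ`. -/
theorem stmt_6 (κ : Cardinal) (hκ : ℵ₀ ≤ κ) (h : κ ^< κ = κ)
    (X : Set (GBS κ)) (hX : GBBorel κ X) :
    IsSigma11 κ X ∧ IsSigma11 κ Xᶜ := by
  have hreg := Cardinal.isRegular_of_powerlt_self hκ h
  induction hX with
  | basic N hN =>
    exact ⟨.of_isClosed (GBS.isClosed_of_mem_gBaireBasic hκ hN),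
      .of_isClosed (TopologicalSpace.isOpen_generateFrom_of_mem hN).isClosed_compl⟩
  | iUnion ι A hι _ ih =>
    exact ⟨.iUnion hreg hι fun i => (ih i).1, compl_iUnion A ▸ .iInter hreg hι fun i => (ih i).2⟩
  | iInter ι A hι _ ih =>
    exact ⟨.iInter hreg hι fun i => (ih i).1, compl_iInter A ▸ .iUnion hreg hι fun i => (ih i).2⟩
end
end

section
/- For trees T₀, T₁, write T₀ ≤ T₁ if there is an order-preserving map g : T₀ → T₁ (not necessarily injective). Then T₀ ≤ T₁ if and only if player II has a winning strategy in the game O(T₀, T₁), in which at each move α player I chooses t_α ∈ T₀, player II responds with u_α ∈ T₁, and the requirement is that for all α < β, t_α < t_β and u_α < u_β and (appropriately) the moves remain order-compatible; the first player to break the rules loses. -/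
open Cardinal Ordinal Set
noncomputable section

/-- A strategy of player II in the game `O(T₀, T₁)`: II's move at stage `α`
depends only on I's moves `t β` for `β ≤ α`. -/
structure GameOStrategy (T₀ T₁ : Type) [PartialOrder T₀] [PartialOrder T₁] where
  move : Ordinal → (Ordinal → T₀) → T₁
  consistent : ∀ (α : Ordinal) (t t' : Ordinal → T₀),
    (∀ β ≤ α, t β = t' β) → move α t = move α t'

/-- `s` is a winning strategy for II in `O(T₀, T₁)`: against any sequence of
moves of I that is strictly increasing up to stage `γ` (I follows the rules),
II's responses are strictly increasing up to stage `γ` (II never breaks the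
rules first). -/
def GameOWinning {T₀ T₁ : Type} [PartialOrder T₀] [PartialOrder T₁]
    (s : GameOStrategy T₀ T₁) : Prop :=
  ∀ (t : Ordinal → T₀) (γ : Ordinal),
    (∀ α β, α < β → β ≤ γ → t α < t β) →
    ∀ α β, α < β → β ≤ γ → s.move α t < s.move β t

/-!
Send each `x : T₀` to II's answer, at stage `rank x`, to the play of I that runs through the
predecessors of `x` in increasing order and ends in `x`. In a tree this play is determined by `x`:
the predecessors of `x` form a well-ordered chain whose element of rank `o` is unique. If `x < y`,
the play towards `x` is an initial segment of the play towards `y`, so II's answer for `x` is one of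
II's moves in the play towards `y`, made before the move answering `y`.
-/

open IsWellFounded

section Tree

variable {T : Type*} [PartialOrder T]

theorem le_total_of_le_of_le (hlin : ∀ x : T, IsChain (· ≤ ·) (Iio x)) {x y z : T}
    (hy : y ≤ x) (hz : z ≤ x) : y ≤ z ∨ z ≤ y := by
  obtain rfl | hy := hy.eq_or_lt
  · exact Or.inr hz
  obtain rfl | hz := hz.eq_or_lt
  · exact Or.inl hy.le
  obtain rfl | hne := eq_or_ne y z
  · exact Or.inl le_rfl
  exact hlin x hy hz hne

variable [WellFoundedLT T]

theorem exists_le_rank_eq {x : T} {o : Ordinal} (ho : o ≤ rank (· < ·) x) :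
    ∃ y ≤ x, rank (· < ·) y = o := by
  induction x using WellFoundedLT.induction with
  | _ x ih =>
  obtain rfl | ho := ho.eq_or_lt
  · exact ⟨x, le_rfl, rfl⟩
  rw [rank_eq, Ordinal.lt_iSup_iff] at ho
  obtain ⟨⟨y, hyx⟩, ho⟩ := ho
  obtain ⟨z, hzy, rfl⟩ := ih y hyx (Order.lt_succ_iff.1 ho)
  exact ⟨z, hzy.trans hyx.le, rfl⟩

theorem eq_of_le_of_rank_eq {x y : T} (hyx : y ≤ x) (h : rank (· < ·) y = rank (· < ·) x) :
    y = x :=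
  hyx.eq_of_not_lt fun hlt => (rank_lt_of_rel hlt).ne h

theorem rank_injOn_Iic (hlin : ∀ x : T, IsChain (· ≤ ·) (Iio x)) (x : T) :
    InjOn (rank (· < ·)) (Iic x) := by
  intro y hy z hz h
  rcases le_total_of_le_of_le hlin hy hz with hyz | hzy
  · exact eq_of_le_of_rank_eq hyz h
  · exact (eq_of_le_of_rank_eq hzy h.symm).symm

/-- The element of rank `o` below `x`; junk value `x` when `rank x < o`. -/
def branchPlay (x : T) (o : Ordinal) : T :=
  open Classical in if h : ∃ y ≤ x, rank (· < ·) y = o then h.choose else x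

theorem branchPlay_spec {x : T} {o : Ordinal} (ho : o ≤ rank (· < ·) x) :
    branchPlay x o ≤ x ∧ rank (· < ·) (branchPlay x o) = o := by
  have h := exists_le_rank_eq ho
  rw [branchPlay, dif_pos h]
  exact h.choose_spec

theorem branchPlay_eq_of_le (hlin : ∀ x : T, IsChain (· ≤ ·) (Iio x)) {x y : T} (hxy : x ≤ y)
    {o : Ordinal} (ho : o ≤ rank (· < ·) x) : branchPlay x o = branchPlay y o := by
  have hox := branchPlay_spec ho
  have hoy := branchPlay_spec (ho.trans (WellFoundedLT.rank_strictMono.monotone hxy))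
  exact rank_injOn_Iic hlin y (hox.1.trans hxy) hoy.1 (hox.2.trans hoy.2.symm)

theorem branchPlay_strictMonoOn (hlin : ∀ x : T, IsChain (· ≤ ·) (Iio x)) (x : T) :
    StrictMonoOn (branchPlay x) (Iic (rank (· < ·) x)) := by
  intro α hα β hβ hαβ
  obtain ⟨hαx, hα⟩ := branchPlay_spec hα
  obtain ⟨hβx, hβ⟩ := branchPlay_spec hβ
  rcases le_total_of_le_of_le hlin hαx hβx with hle | hle
  · exact hle.lt_of_ne fun h => hαβ.ne (hα.symm.trans (h ▸ hβ))
  · have := WellFoundedLT.rank_strictMono.monotone hle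
    rw [hα, hβ] at this
    exact absurd hαβ this.not_gt

end Tree

namespace GameOStrategy

variable {T₀ T₁ : Type} [PartialOrder T₀] [PartialOrder T₁]

def ofMap (g : T₀ → T₁) : GameOStrategy T₀ T₁ where
  move α t := g (t α)
  consistent α _ _ h := congrArg g (h α le_rfl)

theorem gameOWinning_ofMap {g : T₀ → T₁} (hg : StrictMono g) : GameOWinning (ofMap g) :=
  fun _ _ ht α β hαβ hβγ => hg (ht α β hαβ hβγ)

def toMap [WellFoundedLT T₀] (s : GameOStrategy T₀ T₁) (x : T₀) : T₁ :=
  s.move (rank (· < ·) x) (branchPlay x)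

end GameOStrategy

theorem GameOWinning.strictMono_toMap {T₀ T₁ : Type} [PartialOrder T₀] [PartialOrder T₁]
    [WellFoundedLT T₀] (hlin : ∀ x : T₀, IsChain (· ≤ ·) (Iio x)) {s : GameOStrategy T₀ T₁}
    (hs : GameOWinning s) : StrictMono s.toMap := by
  intro x y hxy
  have hplay : s.move (rank (· < ·) x) (branchPlay x) = s.move (rank (· < ·) x) (branchPlay y) :=
    s.consistent _ _ _ fun _ hβ => branchPlay_eq_of_le hlin hxy.le hβ
  rw [GameOStrategy.toMap, GameOStrategy.toMap, hplay]
  exact hs (branchPlay y) (rank (· < ·) y)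
    (fun _ _ hαβ hβ => branchPlay_strictMonoOn hlin y (hαβ.le.trans hβ) hβ hαβ)
    _ _ (rank_lt_of_rel hxy) le_rfl

theorem stmt_10_general (T₀ T₁ : Type) [PartialOrder T₀] [PartialOrder T₁]
    (hwf₀ : WellFoundedLT T₀) (hlin₀ : ∀ x : T₀, IsChain (· ≤ ·) (Set.Iio x)) :
    (∃ g : T₀ → T₁, ∀ x y : T₀, x < y → g x < g y) ↔
      ∃ s : GameOStrategy T₀ T₁, GameOWinning s :=
  ⟨fun ⟨g, hg⟩ => ⟨.ofMap g, GameOStrategy.gameOWinning_ofMap fun _ _ => hg _ _⟩,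
    fun ⟨s, hs⟩ => ⟨s.toMap, fun _ _ h => hs.strictMono_toMap hlin₀ h⟩⟩

/-- For trees `T₀`, `T₁` (well-founded partial orders with linearly ordered
sets of predecessors), there is an order-preserving map `g : T₀ → T₁` (not
necessarily injective) iff player II has a winning strategy in `O(T₀, T₁)`. -/
theorem stmt_10 (T₀ T₁ : Type) [PartialOrder T₀] [PartialOrder T₁]
    (hwf₀ : WellFoundedLT T₀) (hlin₀ : ∀ x : T₀, IsChain (· ≤ ·) (Set.Iio x))
    (hwf₁ : WellFoundedLT T₁) (hlin₁ : ∀ x : T₁, IsChain (· ≤ ·) (Set.Iio x)) :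
    (∃ g : T₀ → T₁, ∀ x y : T₀, x < y → g x < g y) ↔
      ∃ s : GameOStrategy T₀ T₁, GameOWinning s :=
  stmt_10_general T₀ T₁ hwf₀ hlin₀
end
end

section
/- Assume κ^{<κ} = κ. Then Δ¹₁(κ) ≠ Σ¹₁(κ): there is a Σ¹₁(κ) subset of κ^κ whose complement is not Σ¹₁(κ). -/
open Cardinal Ordinal Set Topology
noncomputable section

/-!
Since `κ^<κ = κ`, there are only `κ` basic boxes `N_η × N_ν` in `κ^κ × κ^κ`; enumerate them as
`(e i)_{i<κ}`. A closed set is the complement of the union of the boxes disjoint from it, so every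
closed set is `C_x`, the complement of the union of the `e i` with `x i ≠ z₀`, for some `x ∈ κ^κ`.
The diagonal `{(x, y) | (x, y) ∈ C_x}` is closed, because `x i` is constant on a basic
neighbourhood of `x`. Its projection `A` is `Σ¹₁(κ)`, and Cantor's diagonal argument shows that
`Aᶜ` differs from every projection of a `C_x`.
-/

theorem exists_fst_image_closed_compl_not_fst_image_closed {X : Type*} [TopologicalSpace X]
    (F : X → Set (X × X)) (hF : ∀ C, IsClosed C → ∃ x, F x = C)
    (hdiag : IsClosed {q : X × X | q ∈ F q.1}) :
    ∃ A : Set X, (∃ C : Set (X × X), IsClosed C ∧ A = Prod.fst '' C) ∧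
      ¬ ∃ C : Set (X × X), IsClosed C ∧ Aᶜ = Prod.fst '' C := by
  set D := {q : X × X | q ∈ F q.1}
  have mem_fst_image_diag (x : X) : x ∈ Prod.fst '' D ↔ x ∈ Prod.fst '' F x := by
    simp [D]
  refine ⟨Prod.fst '' D, ⟨D, hdiag, rfl⟩, ?_⟩
  rintro ⟨C, hC, hcompl⟩
  obtain ⟨x, rfl⟩ := hF C hC
  exact iff_not_self ((mem_fst_image_diag x).trans (Set.ext_iff.mp hcompl x).symm)

namespace GBaire

variable {κ : Cardinal}

local instance : TopologicalSpace (GBS κ) := gbTop κ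

lemma infinite_toType_ord (hκ : ℵ₀ ≤ κ) : Infinite κ.ord.ToType := by
  rwa [Cardinal.infinite_iff, mk_ord_toType]

/-- Codes `⟨b, η⟩` of the basic open sets `N_η`, with `η` defined exactly below `b`;
unlike `GBaireBasic`, there are only `κ^<κ` of them. -/
abbrev Code (κ : Cardinal) : Type := Σ b : κ.ord.ToType, (Iio b → κ.ord.ToType)

def Code.cyl (c : Code κ) : Set (GBS κ) :=
  {f | ∀ i (hi : i < c.1), f i = c.2 ⟨i, hi⟩}

def Code.box (c : Code κ × Code κ) : Set (GBS κ × GBS κ) :=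
  c.1.cyl ×ˢ c.2.cyl

def restrict (b : κ.ord.ToType) (x : GBS κ) : Code κ :=
  ⟨b, fun i => x i⟩

lemma Code.cyl_mem_gBaireBasic (c : Code κ) : c.cyl ∈ GBaireBasic κ := by
  classical
  refine ⟨c.1, fun i => if hi : i < c.1 then c.2 ⟨i, hi⟩ else i, ?_⟩
  ext f
  exact forall₂_congr fun i hi => by simp [hi]

lemma Code.isOpen_cyl (c : Code κ) : IsOpen c.cyl :=
  TopologicalSpace.isOpen_generateFrom_of_mem c.cyl_mem_gBaireBasic

lemma Code.isOpen_box (c : Code κ × Code κ) : IsOpen (Code.box c) :=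
  c.1.isOpen_cyl.prod c.2.isOpen_cyl

lemma mem_cyl_restrict_self (b : κ.ord.ToType) (x : GBS κ) : x ∈ (restrict b x).cyl :=
  fun _ _ => rfl

lemma cyl_restrict_anti {b b' : κ.ord.ToType} (hb : b ≤ b') (x : GBS κ) :
    (restrict b' x).cyl ⊆ (restrict b x).cyl :=
  fun _ hf i hi => hf i (hi.trans_le hb)

lemma isOpen_of_forall_exists_cyl_subset {U : Set (GBS κ)}
    (hU : ∀ x ∈ U, ∃ b, (restrict b x).cyl ⊆ U) : IsOpen U := by
  refine isOpen_iff_forall_mem_open.mpr fun x hx => ?_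
  obtain ⟨b, hb⟩ := hU x hx
  exact ⟨_, hb, (restrict b x).isOpen_cyl, mem_cyl_restrict_self b x⟩

lemma _root_.IsOpen.exists_cyl_subset [Nonempty κ.ord.ToType] {U : Set (GBS κ)}
    (hU : IsOpen U) : ∀ x ∈ U, ∃ b, (restrict b x).cyl ⊆ U := by
  induction hU with
  | basic s hs =>
    obtain ⟨b, η, rfl⟩ := hs
    exact fun x hx => ⟨b, fun f hf i hi => (hf i hi).trans (hx i hi)⟩
  | univ => exact fun _ _ => ⟨Classical.arbitrary _, subset_univ _⟩
  | inter s t _ _ ihs iht =>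
    intro x hx
    obtain ⟨b₁, h₁⟩ := ihs x hx.1
    obtain ⟨b₂, h₂⟩ := iht x hx.2
    exact ⟨max b₁ b₂, subset_inter ((cyl_restrict_anti (le_max_left _ _) x).trans h₁)
      ((cyl_restrict_anti (le_max_right _ _) x).trans h₂)⟩
  | sUnion S _ ih =>
    rintro x ⟨s, hs, hxs⟩
    obtain ⟨b, hb⟩ := ih s hs x hxs
    exact ⟨b, hb.trans (subset_sUnion_of_mem hs)⟩

lemma exists_disjoint_box_restrict [Nonempty κ.ord.ToType] {C : Set (GBS κ × GBS κ)}
    (hC : IsClosed C) {q : GBS κ × GBS κ} (hq : q ∉ C) :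
    ∃ b, Disjoint (Code.box (restrict b q.1, restrict b q.2)) C := by
  obtain ⟨u, v, hu, hv, hqu, hqv, huv⟩ := isOpen_prod_iff.mp hC.isOpen_compl q.1 q.2 hq
  obtain ⟨b₁, h₁⟩ := hu.exists_cyl_subset q.1 hqu
  obtain ⟨b₂, h₂⟩ := hv.exists_cyl_subset q.2 hqv
  refine ⟨max b₁ b₂, subset_compl_iff_disjoint_right.mp ((prod_mono ?_ ?_).trans huv)⟩
  · exact (cyl_restrict_anti (le_max_left _ _) q.1).trans h₁
  · exact (cyl_restrict_anti (le_max_right _ _) q.2).trans h₂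

lemma isOpen_setOf_apply_ne [NoMaxOrder κ.ord.ToType] (i z : κ.ord.ToType) :
    IsOpen {x : GBS κ | x i ≠ z} := by
  obtain ⟨b, hib⟩ := exists_gt i
  refine isOpen_of_forall_exists_cyl_subset fun x hx => ⟨b, fun f hf => ?_⟩
  show f i ≠ z
  rwa [hf i hib]

lemma mk_code_le (hκ : ℵ₀ ≤ κ) (h : κ ^< κ = κ) : #(Code κ) ≤ κ :=
  calc #(Code κ) = Cardinal.sum fun b : κ.ord.ToType => #(Iio b → κ.ord.ToType) :=
        mk_sigma _
    _ ≤ Cardinal.sum fun _ : κ.ord.ToType => κ := sum_le_sum _ _ fun b => by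
        rw [← power_def, mk_ord_toType]
        exact (le_powerlt κ (by simpa using mk_Iio_lt b (by simp))).trans h.le
    _ = κ := by rw [sum_const', mk_ord_toType, mul_eq_self hκ]

lemma exists_surjective_code_prod (hκ : ℵ₀ ≤ κ) (h : κ ^< κ = κ) :
    ∃ e : κ.ord.ToType → Code κ × Code κ, Function.Surjective e := by
  have := infinite_toType_ord hκ
  have hle : #(Code κ × Code κ) ≤ #κ.ord.ToType := by
    rw [mk_prod, Cardinal.lift_id, mk_ord_toType]
    exact (mul_le_mul' (mk_code_le hκ h) (mk_code_le hκ h)).trans (mul_eq_self hκ).le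
  obtain ⟨f⟩ := (le_def _ _).mp hle
  have : Nonempty (Code κ) := ⟨restrict (Classical.arbitrary _) id⟩
  exact ⟨_, Function.invFun_surjective f.injective⟩

section Coding

variable (e : κ.ord.ToType → Code κ × Code κ)

def closedOfCode (z₀ : κ.ord.ToType) (x : GBS κ) : Set (GBS κ × GBS κ) :=
  (⋃ (i) (_ : x i ≠ z₀), Code.box (e i))ᶜ

variable {e}

lemma compl_iUnion_disjoint_box_eq [Nonempty κ.ord.ToType] (he : Function.Surjective e)
    {C : Set (GBS κ × GBS κ)} (hC : IsClosed C) :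
    (⋃ (i) (_ : Disjoint (Code.box (e i)) C), Code.box (e i))ᶜ = C := by
  refine Subset.antisymm (fun q hq => by_contra fun hqC => ?_) ?_
  · obtain ⟨b, hb⟩ := exists_disjoint_box_restrict hC hqC
    obtain ⟨i, hi⟩ := he (restrict b q.1, restrict b q.2)
    refine hq (mem_iUnion₂.mpr ⟨i, by rwa [hi], ?_⟩)
    rw [hi]
    exact ⟨mem_cyl_restrict_self b q.1, mem_cyl_restrict_self b q.2⟩
  · exact subset_compl_iff_disjoint_left.mpr (disjoint_iUnion₂_left.mpr fun _ h => h)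

lemma exists_closedOfCode_eq [Nonempty κ.ord.ToType] (he : Function.Surjective e)
    {z₀ z₁ : κ.ord.ToType} (hz : z₀ ≠ z₁) {C : Set (GBS κ × GBS κ)} (hC : IsClosed C) :
    ∃ x, closedOfCode e z₀ x = C := by
  classical
  refine ⟨fun i => if Disjoint (Code.box (e i)) C then z₁ else z₀, ?_⟩
  simp only [closedOfCode, ite_ne_right_iff, and_iff_left hz.symm]
  exact compl_iUnion_disjoint_box_eq he hC

lemma isClosed_setOf_mem_closedOfCode_fst [NoMaxOrder κ.ord.ToType] (z₀ : κ.ord.ToType) :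
    IsClosed {q : GBS κ × GBS κ | q ∈ closedOfCode e z₀ q.1} := by
  have hcompl : {q : GBS κ × GBS κ | q ∈ closedOfCode e z₀ q.1}ᶜ =
      ⋃ i, Prod.fst ⁻¹' {x | x i ≠ z₀} ∩ Code.box (e i) := by
    ext q
    simp [closedOfCode]
  rw [← isOpen_compl_iff, hcompl]
  exact isOpen_iUnion fun i =>
    ((isOpen_setOf_apply_ne i z₀).preimage continuous_fst).inter (Code.isOpen_box (e i))

end Coding

end GBaire

open GBaire in
/-- `Δ¹₁(κ) ≠ Σ¹₁(κ)`: there is a `Σ¹₁(κ)` set whose complement is not `Σ¹₁(κ)`. -/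
theorem stmt_15 (κ : Cardinal) (hκ : ℵ₀ ≤ κ) (h : κ ^< κ = κ) :
    ∃ A : Set (GBS κ), IsSigma11 κ A ∧ ¬ IsSigma11 κ Aᶜ := by
  have := infinite_toType_ord hκ
  have := Cardinal.noMaxOrder hκ
  obtain ⟨e, he⟩ := exists_surjective_code_prod hκ h
  obtain ⟨z₀, z₁, hz⟩ := exists_pair_ne κ.ord.ToType
  exact @exists_fst_image_closed_compl_not_fst_image_closed _ (gbTop κ) (closedOfCode e z₀)
    (fun C hC => exists_closedOfCode_eq he hz hC) (isClosed_setOf_mem_closedOfCode_fst z₀)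
end
end

section
/- Assume κ^{<κ} = κ. Every set in Borel*_ω(κ), i.e. coded by a well-founded Borel*-code, is Borel(κ); conversely every Borel(κ) set has a Borel*_ω(κ)-code. Hence Borel(κ) = Borel*_ω(κ). -/
/-!
A tree without infinite chains is well-founded in both directions, so the set of `η` for which
player II wins the game from a node `x` can be computed by recursion from the leaves: it is the
label at a leaf, and the union (at `∪`-nodes) or intersection (at `∩`-nodes) of the sets of the
immediate successors. At an `∩`-node II wins by gluing winning strategies for the successor
subgames, which live on pairwise disjoint cones. As a tree has at most `κ` nodes, these unions and
intersections have size `≤ κ`, so the coded set is `Borel(κ)`.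

Conversely, a basic open set has a one-node code, and `⋃ i, A i`, `⋂ i, A i` are coded by placing a
new root labelled `∪` or `∩` below the disjoint union of codes of the `A i`. The empty union is the
intersection of two disjoint basic open sets.
-/
open Cardinal Ordinal Set Topology
noncomputable section

/-- A leaf of a tree: a maximal element. -/
def IsLeaf {T : Type} [PartialOrder T] (x : T) : Prop := ¬ ∃ y, x < y

/-- `(T, u, f)` is a `Borel*`-code whose tree has no chains of length `lam`:
`T` has size `≤ κ`, all chains have cardinality `< lam`, `T` is a tree
(well-founded with linearly ordered sets of predecessors) with a root, every
nonempty chain has a (unique) supremum (closedness), and leaves are labelled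
by basic open sets (`u` labels the interior nodes: `true` = `∪`, `false` = `∩`). -/
def BSCode (κ lam : Cardinal) (T : Type) [PartialOrder T]
    (u : T → Bool) (f : T → Set (GBS κ)) : Prop :=
  Cardinal.mk T ≤ κ ∧
  (∀ c : Set T, IsChain (· ≤ ·) c → Cardinal.mk c < lam) ∧
  WellFoundedLT T ∧
  (∀ x : T, IsChain (· ≤ ·) (Set.Iio x)) ∧
  (∀ c : Set T, IsChain (· ≤ ·) c → c.Nonempty → ∃ y, IsLUB c y) ∧
  (∃ r : T, ∀ x, r ≤ x) ∧
  (∀ x : T, IsLeaf x → f x ∈ GBaireBasic κ)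

/-- A (positional) strategy of player II picks an immediate successor at each
non-leaf `∪`-node. -/
def ValidStrat {T : Type} [PartialOrder T] (u : T → Bool) (s : T → T) : Prop :=
  ∀ x, ¬ IsLeaf x → u x = true → x ⋖ s x

/-- `P` is (the set of positions of) a play of the `Borel*`-game consistent with
the strategy `s` of player II: a chain starting at the root, proceeding to an
immediate successor at each step (chosen by `s` at `∪`-nodes) and to the unique
supremum of the earlier moves at limits. -/
def IsPlay {T : Type} [PartialOrder T] (u : T → Bool) (s : T → T) (P : Set T) : Prop :=
  IsChain (· ≤ ·) P ∧
  (∀ r : T, (∀ z, r ≤ z) → r ∈ P) ∧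
  (∀ x ∈ P, ∀ y ∈ P, x < y → (∀ z ∈ P, z ≤ x ∨ y ≤ z) →
      x ⋖ y ∧ (u x = true → y = s x)) ∧
  (∀ x ∈ P, (∃ z ∈ P, z < x) →
      (∀ z ∈ P, z < x → ∃ w ∈ P, z < w ∧ w < x) →
      IsLUB {z | z ∈ P ∧ z < x} x)

/-- `s` is a winning strategy for player II in `B*(η, (T, u, f))`: whenever a
play consistent with `s` reaches a leaf `x`, we have `η ∈ f x`. -/
def IIWinsBStar (κ : Cardinal) {T : Type} [PartialOrder T]
    (u : T → Bool) (s : T → T) (f : T → Set (GBS κ)) (η : GBS κ) : Prop :=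
  ValidStrat u s ∧ ∀ P, IsPlay u s P → ∀ x ∈ P, IsLeaf x → η ∈ f x

/-- `X` is coded by the `Borel*`-code `(T, u, f)`. -/
def IsBorelStarAux (κ lam : Cardinal) (T : Type) [PartialOrder T]
    (u : T → Bool) (f : T → Set (GBS κ)) (X : Set (GBS κ)) : Prop :=
  BSCode κ lam T u f ∧ ∀ η, η ∈ X ↔ ∃ s : T → T, IIWinsBStar κ u s f η

/-- `X ⊆ κ^κ` is `Borel*_lam(κ)`; `Borel*(κ)` is the case `lam = κ` and
`Borel*_ω(κ)` (well-founded codes) is the case `lam = ℵ₀`. -/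
def IsBorelStar (κ lam : Cardinal) (X : Set (GBS κ)) : Prop :=
  ∃ (T : Type) (inst : PartialOrder T) (u : T → Bool) (f : T → Set (GBS κ)),
    @IsBorelStarAux κ lam T inst u f X


namespace BorelStar

section Order

variable {S T : Type} [PartialOrder S] [PartialOrder T]

lemma wellFoundedGT_of_chains_finite (h : ∀ c : Set T, IsChain (· ≤ ·) c → c.Finite) :
    WellFoundedGT T := by
  rw [WellFoundedGT, isWellFounded_iff, RelEmbedding.wellFounded_iff_isEmpty]
  refine ⟨fun g => ?_⟩
  have hg : StrictMono g := fun _ _ hmn => g.map_rel_iff.2 hmn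
  exact infinite_range_of_injective hg.injective (h _ hg.monotone.isChain_range)

lemma wellFoundedLT_of_chains_finite (h : ∀ c : Set T, IsChain (· ≤ ·) c → c.Finite) :
    WellFoundedLT T :=
  wellFoundedGT_of_chains_finite (T := Tᵒᵈ) fun c hc => h c hc.symm

lemma exists_isLUB_of_chains_finite (h : ∀ c : Set T, IsChain (· ≤ ·) c → c.Finite)
    {c : Set T} (hc : IsChain (· ≤ ·) c) (hne : c.Nonempty) : ∃ y, IsLUB c y := by
  obtain ⟨m, hm⟩ := (h c hc).exists_maximal hne
  exact ⟨m, IsGreatest.isLUB ⟨hm.prop, fun z hz => (hc.total hz hm.prop).elim id (hm.le_of_ge hz)⟩⟩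

lemma isLeaf_apply_iff (e : S ↪o T) (he : IsUpperSet (range e)) {a : S} :
    IsLeaf (e a) ↔ IsLeaf a := by
  refine not_congr ⟨fun ⟨y, hy⟩ => ?_, fun ⟨b, hb⟩ => ⟨e b, e.lt_iff_lt.2 hb⟩⟩
  obtain ⟨b, rfl⟩ := he hy.le (mem_range_self a)
  exact ⟨b, e.lt_iff_lt.1 hy⟩

lemma covBy_apply_iff (e : S ↪o T) (he : IsUpperSet (range e)) {a : S} {y : T} :
    e a ⋖ y ↔ ∃ b, a ⋖ b ∧ e b = y := by
  refine ⟨fun hy => ?_, fun ⟨b, hb, hby⟩ => hby ▸ (he.ordConnected.apply_covBy_apply_iff e).2 hb⟩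
  obtain ⟨b, rfl⟩ := he hy.le (mem_range_self a)
  exact ⟨b, (he.ordConnected.apply_covBy_apply_iff e).1 hy, rfl⟩

end Order

section CodedSet

variable {S T : Type} [PartialOrder S] [PartialOrder T] [WellFoundedGT T] {α : Type*}

open Classical in
def codedSet (u : T → Bool) (f : T → Set α) : T → Set α :=
  wellFounded_gt.fix fun x rec =>
    if IsLeaf x then f x
    else bif u x then ⋃ y : {y // x ⋖ y}, rec y y.2.lt else ⋂ y : {y // x ⋖ y}, rec y y.2.lt

variable {u : T → Bool} {f : T → Set α} {x : T}

lemma codedSet_of_isLeaf (hx : IsLeaf x) : codedSet u f x = f x := by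
  rw [codedSet, wellFounded_gt.fix_eq, if_pos hx]

lemma codedSet_of_not_isLeaf (hx : ¬IsLeaf x) :
    codedSet u f x = bif u x then ⋃ y : {y // x ⋖ y}, codedSet u f y
      else ⋂ y : {y // x ⋖ y}, codedSet u f y := by
  rw [codedSet, wellFounded_gt.fix_eq, if_neg hx]

lemma gbBorel_codedSet {κ : Cardinal} {f : T → Set (GBS κ)} (hT : #T ≤ κ)
    (hf : ∀ x, IsLeaf x → f x ∈ GBaireBasic κ) (x : T) : GBBorel κ (codedSet u f x) := by
  induction x using WellFoundedGT.induction with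
  | _ x ih =>
  by_cases hx : IsLeaf x
  · rw [codedSet_of_isLeaf hx]
    exact .basic _ (hf x hx)
  have hcov : #{y // x ⋖ y} ≤ κ := (mk_subtype_le _).trans hT
  rw [codedSet_of_not_isLeaf hx]
  cases u x
  · exact .iInter _ _ hcov fun y => ih y y.2.lt
  · exact .iUnion _ _ hcov fun y => ih y y.2.lt

lemma codedSet_comp [WellFoundedGT S] (e : S ↪o T) (he : IsUpperSet (range e))
    (u : T → Bool) (f : T → Set α) (a : S) :
    codedSet (u ∘ e) (f ∘ e) a = codedSet u f (e a) := by
  induction a using WellFoundedGT.induction with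
  | _ a ih =>
  by_cases ha : IsLeaf a
  · rw [codedSet_of_isLeaf ha, codedSet_of_isLeaf ((isLeaf_apply_iff e he).2 ha)]
    rfl
  rw [codedSet_of_not_isLeaf ha, codedSet_of_not_isLeaf (mt (isLeaf_apply_iff e he).1 ha)]
  let φ : {b // a ⋖ b} → {y // e a ⋖ y} :=
    fun b => ⟨e b, (covBy_apply_iff e he).2 ⟨b, b.2, rfl⟩⟩
  have hφ : φ.Surjective := by
    rintro ⟨y, hy⟩
    obtain ⟨b, hb, rfl⟩ := (covBy_apply_iff e he).1 hy
    exact ⟨⟨b, hb⟩, rfl⟩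
  have ih' (b : {b // a ⋖ b}) : codedSet (u ∘ e) (f ∘ e) b = codedSet u f (φ b) := ih b b.2.lt
  simp only [ih', hφ.iUnion_comp fun y => codedSet u f y, hφ.iInter_comp fun y => codedSet u f y,
    Function.comp_apply]

end CodedSet

section Game

variable {T : Type} [PartialOrder T] {α : Type*} {u : T → Bool} {s s' : T → T} {f : T → Set α}
  {x y : T} {P : Set T} {η : α}

/-- The limit clause of `IsPlay` is omitted: it is vacuous once `T` is upwards well-founded
(`isPlay_iff_isPlayFrom`). -/
structure IsPlayFrom (u : T → Bool) (s : T → T) (x : T) (P : Set T) : Prop where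
  isChain : IsChain (· ≤ ·) P
  mem : x ∈ P
  le : ∀ z ∈ P, x ≤ z
  step : ∀ a ∈ P, ∀ b ∈ P, a < b → (∀ z ∈ P, z ≤ a ∨ b ≤ z) → a ⋖ b ∧ (u a = true → b = s a)

def WinsFrom (u : T → Bool) (s : T → T) (f : T → Set α) (x : T) (η : α) : Prop :=
  ∀ P, IsPlayFrom u s x P → ∀ y ∈ P, IsLeaf y → η ∈ f y

def HasWinningStrategyFrom (u : T → Bool) (f : T → Set α) (x : T) (η : α) : Prop :=
  ∃ s, ValidStrat u s ∧ WinsFrom u s f x η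

lemma isPlayFrom_singleton (u : T → Bool) (s : T → T) (x : T) : IsPlayFrom u s x {x} where
  isChain := subsingleton_singleton.isChain
  mem := rfl
  le := by rintro z rfl; rfl
  step := by rintro a rfl b rfl hab; exact absurd hab (lt_irrefl _)

lemma IsPlayFrom.congr (hP : IsPlayFrom u s x P) (hs : ∀ a ∈ P, s a = s' a) :
    IsPlayFrom u s' x P where
  isChain := hP.isChain
  mem := hP.mem
  le := hP.le
  step := fun a ha b hb hab hgap =>
    (hP.step a ha b hb hab hgap).imp_right fun h hu => (h hu).trans (hs a ha)

lemma IsPlayFrom.insert_of_covBy (hxy : x ⋖ y) (hs : u x = true → y = s x) {Q : Set T}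
    (hQ : IsPlayFrom u s y Q) : IsPlayFrom u s x (insert x Q) := by
  have hle : ∀ z ∈ insert x Q, x ≤ z := by
    rintro z (rfl | hz)
    exacts [le_rfl, hxy.le.trans (hQ.le z hz)]
  refine ⟨hQ.isChain.insert fun z hz _ => .inl (hle z (.inr hz)), .inl rfl, hle, ?_⟩
  rintro a ha b hb hab hgap
  have hbQ : b ∈ Q := hb.resolve_left (ne_of_gt (lt_of_le_of_lt (hle a ha) hab))
  rcases ha with rfl | ha
  · obtain rfl : b = y := (hgap y (.inr hQ.mem)).elim (fun h => absurd hxy.lt h.not_gt)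
      fun h => le_antisymm h (hQ.le b hbQ)
    exact ⟨hxy, hs⟩
  · exact hQ.step a ha b hbQ hab fun z hz => hgap z (.inr hz)

lemma IsPlayFrom.exists_covBy [WellFoundedLT T] (hP : IsPlayFrom u s x P) (hne : P ≠ {x}) :
    ∃ y, x ⋖ y ∧ (u x = true → y = s x) ∧ (∀ z ∈ P \ {x}, y ≤ z) ∧
      IsPlayFrom u s y (P \ {x}) := by
  have hP' : (P \ {x}).Nonempty :=
    nonempty_of_not_subset fun h => hne (subset_antisymm h (singleton_subset_iff.2 hP.mem))
  obtain ⟨y, hy, hymin⟩ := wellFounded_lt.has_min _ hP'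
  have hyle : ∀ z ∈ P \ {x}, y ≤ z := fun z hz =>
    (hP.isChain.total hy.1 hz.1).elim id fun hzy =>
      (eq_or_lt_of_le hzy).elim (fun h => h ▸ le_rfl) fun h => absurd h (hymin z hz)
  have hxy : x < y := lt_of_le_of_ne (hP.le y hy.1) (Ne.symm hy.2)
  have hgap : ∀ z ∈ P, z ≤ x ∨ y ≤ z := fun z hz =>
    (eq_or_ne z x).imp le_of_eq fun h => hyle z ⟨hz, h⟩
  obtain ⟨hcov, hs⟩ := hP.step x hP.mem y hy.1 hxy hgap
  refine ⟨y, hcov, hs, hyle, hP.isChain.mono sdiff_subset, hy, hyle,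
    fun a ha b hb hab hgap' => hP.step a ha.1 b hb.1 hab fun z hz => ?_⟩
  rcases eq_or_ne z x with rfl | hzx
  · exact .inl (hP.le a ha.1)
  · exact hgap' z ⟨hz, hzx⟩

lemma isPlay_iff_isPlayFrom [WellFoundedGT T] {r : T} (hr : ∀ z, r ≤ z) :
    IsPlay u s P ↔ IsPlayFrom u s r P := by
  refine ⟨fun ⟨hc, hroot, hstep, _⟩ => ⟨hc, hroot r hr, fun z _ => hr z, hstep⟩,
    fun hP => ⟨hP.isChain, fun r' hr' => le_antisymm (hr r') (hr' r) ▸ hP.mem, hP.step, ?_⟩⟩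
  rintro z - ⟨w, hw, hwz⟩ hdense
  obtain ⟨m, hm, hmax⟩ := wellFounded_gt.has_min {w | w ∈ P ∧ w < z} ⟨w, hw, hwz⟩
  obtain ⟨w', hw', hmw', hw'z⟩ := hdense m hm.1 hm.2
  exact absurd hmw' (hmax w' ⟨hw', hw'z⟩)

lemma exists_validStrat [WellFoundedLT T] (u : T → Bool) : ∃ s : T → T, ValidStrat u s := by
  have h (x : T) : ∃ y, ¬IsLeaf x → x ⋖ y := by
    by_cases hx : IsLeaf x
    · exact ⟨x, fun h => absurd hx h⟩
    · obtain ⟨y, hy⟩ := exists_covBy_of_wellFoundedLT (not_isMax_iff.2 (not_not.1 hx))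
      exact ⟨y, fun _ => hy⟩
  choose s hs using h
  exact ⟨s, fun x hx _ => hs x hx⟩

lemma WinsFrom.of_covBy (hw : WinsFrom u s f x η) (hxy : x ⋖ y) (hs : u x = true → y = s x) :
    WinsFrom u s f y η :=
  fun _ hQ z hz hzl => hw _ (hQ.insert_of_covBy hxy hs) z (.inr hz) hzl

lemma winsFrom_of_forall_covBy [WellFoundedLT T] (hx : ¬IsLeaf x)
    (h : ∀ m, x ⋖ m → (u x = true → m = s x) →
      ∃ t, (∀ z, m ≤ z → s z = t z) ∧ WinsFrom u t f m η) :
    WinsFrom u s f x η := by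
  intro P hP ℓ hℓ hℓl
  have hℓx : ℓ ≠ x := fun h => hx (h ▸ hℓl)
  have hne : P ≠ {x} := fun h => hℓx (by simpa [h] using hℓ)
  obtain ⟨m, hm, hms, hmle, hPm⟩ := hP.exists_covBy hne
  obtain ⟨t, hst, ht⟩ := h m hm hms
  exact ht _ (hPm.congr fun a ha => hst a (hmle a ha)) ℓ ⟨hℓ, hℓx⟩ hℓl

lemma eq_of_covBy_of_le (hIio : ∀ z : T, IsChain (· ≤ ·) (Iio z)) {y₁ y₂ z : T}
    (h₁ : x ⋖ y₁) (h₂ : x ⋖ y₂) (hz₁ : y₁ ≤ z) (hz₂ : y₂ ≤ z) : y₁ = y₂ := by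
  by_contra hne
  rcases hz₁.eq_or_lt with rfl | hlt₁
  · exact h₁.2 h₂.lt (hz₂.lt_of_ne (Ne.symm hne))
  rcases hz₂.eq_or_lt with rfl | hlt₂
  · exact h₂.2 h₁.lt hlt₁
  rcases hIio z hlt₁ hlt₂ hne with h | h
  exacts [h₂.2 h₁.lt (h.lt_of_ne hne), h₁.2 h₂.lt (h.lt_of_ne (Ne.symm hne))]

lemma hasWinningStrategyFrom_iff_of_isLeaf [WellFoundedLT T] (hx : IsLeaf x) :
    HasWinningStrategyFrom u f x η ↔ η ∈ f x := by
  refine ⟨fun ⟨s, _, hw⟩ => hw {x} (isPlayFrom_singleton u s x) x rfl hx, fun hη => ?_⟩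
  obtain ⟨s, hs⟩ := exists_validStrat u
  refine ⟨s, hs, fun P hP y hy _ => ?_⟩
  obtain rfl : y = x := by_contra fun h => hx ⟨y, lt_of_le_of_ne (hP.le y hy) (Ne.symm h)⟩
  exact hη

lemma hasWinningStrategyFrom_iff_of_union [WellFoundedLT T] (hx : ¬IsLeaf x)
    (hux : u x = true) :
    HasWinningStrategyFrom u f x η ↔ ∃ y, x ⋖ y ∧ HasWinningStrategyFrom u f y η := by
  classical
  refine ⟨fun ⟨s, hs, hw⟩ => ⟨s x, hs x hx hux, s, hs, hw.of_covBy (hs x hx hux) fun _ => rfl⟩,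
    fun ⟨y, hxy, t, ht, hw⟩ => ⟨Function.update t x y, fun z hz huz => ?_, ?_⟩⟩
  · rcases eq_or_ne z x with rfl | hzx
    · rwa [Function.update_self]
    · rw [Function.update_of_ne hzx]
      exact ht z hz huz
  · refine winsFrom_of_forall_covBy hx fun m hm hms => ⟨t, fun z hz => ?_, ?_⟩
    · exact Function.update_of_ne (hm.lt.trans_le hz).ne' _ _
    · rwa [hms hux, Function.update_self]

lemma hasWinningStrategyFrom_iff_of_inter [WellFoundedLT T]
    (hIio : ∀ z : T, IsChain (· ≤ ·) (Iio z)) (hx : ¬IsLeaf x) (hux : u x = false) :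
    HasWinningStrategyFrom u f x η ↔ ∀ y, x ⋖ y → HasWinningStrategyFrom u f y η := by
  refine ⟨fun ⟨s, hs, hw⟩ y hxy => ⟨s, hs, hw.of_covBy hxy fun h => by simp [hux] at h⟩,
    fun h => ?_⟩
  choose σ hσ hσw using fun y : {y // x ⋖ y} => h y y.2
  obtain ⟨s₀, hs₀⟩ := exists_validStrat u
  classical
  -- above a move `y` of player I, follow the strategy `σ y`
  let s : T → T := fun z => if hz : ∃ y : {y // x ⋖ y}, y.1 ≤ z then σ hz.choose z else s₀ z
  have hs (m : {y // x ⋖ y}) (z : T) (hz : m.1 ≤ z) : s z = σ m z := by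
    have hz' : ∃ y : {y // x ⋖ y}, y.1 ≤ z := ⟨m, hz⟩
    have hchoose : hz'.choose = m :=
      Subtype.ext (eq_of_covBy_of_le hIio hz'.choose.2 m.2 hz'.choose_spec hz)
    simp only [s, dif_pos hz', hchoose]
  refine ⟨s, fun z hz huz => ?_, winsFrom_of_forall_covBy hx fun m hm _ =>
    ⟨σ ⟨m, hm⟩, hs ⟨m, hm⟩, hσw ⟨m, hm⟩⟩⟩
  by_cases hz' : ∃ y : {y // x ⋖ y}, y.1 ≤ z
  · rw [hs _ z hz'.choose_spec]
    exact hσ _ z hz huz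
  · simp only [s, dif_neg hz']
    exact hs₀ z hz huz

lemma hasWinningStrategyFrom_iff_mem_codedSet [WellFoundedLT T] [WellFoundedGT T]
    (hIio : ∀ z : T, IsChain (· ≤ ·) (Iio z)) (x : T) :
    HasWinningStrategyFrom u f x η ↔ η ∈ codedSet u f x := by
  induction x using WellFoundedGT.induction with
  | _ x ih =>
  by_cases hx : IsLeaf x
  · rw [codedSet_of_isLeaf hx, hasWinningStrategyFrom_iff_of_isLeaf hx]
  rw [codedSet_of_not_isLeaf hx]
  cases hux : u x
  · rw [hasWinningStrategyFrom_iff_of_inter hIio hx hux, cond_false, mem_iInter, Subtype.forall]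
    exact forall₂_congr fun y hy => ih y hy.lt
  · rw [hasWinningStrategyFrom_iff_of_union hx hux, cond_true, mem_iUnion]
    exact ⟨fun ⟨y, hy, h⟩ => ⟨⟨y, hy⟩, (ih y hy.lt).1 h⟩,
      fun ⟨y, h⟩ => ⟨y, y.2, (ih y y.2.lt).2 h⟩⟩

lemma exists_iIWinsBStar_iff_mem_codedSet [WellFoundedLT T] [WellFoundedGT T] {κ : Cardinal}
    {f : T → Set (GBS κ)} (hIio : ∀ z : T, IsChain (· ≤ ·) (Iio z)) {r : T} (hr : ∀ z, r ≤ z)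
    (η : GBS κ) : (∃ s, IIWinsBStar κ u s f η) ↔ η ∈ codedSet u f r := by
  rw [← hasWinningStrategyFrom_iff_mem_codedSet hIio]
  simp only [IIWinsBStar, HasWinningStrategyFrom, WinsFrom, isPlay_iff_isPlayFrom hr]

end Game

section Codes

variable {κ : Cardinal} {T : Type} [PartialOrder T] {u : T → Bool} {f : T → Set (GBS κ)}
  {X : Set (GBS κ)}

lemma bsCode_aleph0_iff :
    BSCode κ ℵ₀ T u f ↔ #T ≤ κ ∧ (∀ c : Set T, IsChain (· ≤ ·) c → c.Finite) ∧
      (∀ x : T, IsChain (· ≤ ·) (Iio x)) ∧ (∃ r : T, ∀ x, r ≤ x) ∧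
      ∀ x, IsLeaf x → f x ∈ GBaireBasic κ := by
  simp only [BSCode, lt_aleph0_iff_set_finite]
  refine ⟨fun ⟨hT, hfin, _, hIio, _, hr, hf⟩ => ⟨hT, hfin, hIio, hr, hf⟩,
    fun ⟨hT, hfin, hIio, hr, hf⟩ => ⟨hT, hfin, wellFoundedLT_of_chains_finite hfin, hIio,
      fun _ => exists_isLUB_of_chains_finite hfin, hr, hf⟩⟩

lemma wellFoundedGT_of_bsCode (hc : BSCode κ ℵ₀ T u f) : WellFoundedGT T :=
  wellFoundedGT_of_chains_finite (bsCode_aleph0_iff.1 hc).2.1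

lemma isBorelStarAux_aleph0_iff [WellFoundedGT T] (hc : BSCode κ ℵ₀ T u f) {r : T}
    (hr : ∀ x, r ≤ x) : IsBorelStarAux κ ℵ₀ T u f X ↔ X = codedSet u f r := by
  have : WellFoundedLT T := hc.2.2.1
  rw [IsBorelStarAux, and_iff_right hc, Set.ext_iff]
  exact forall_congr' fun η => by
    rw [exists_iIWinsBStar_iff_mem_codedSet (bsCode_aleph0_iff.1 hc).2.2.1 hr]

lemma IsBorelStar.gbBorel (hX : IsBorelStar κ ℵ₀ X) : GBBorel κ X := by
  obtain ⟨T, _, u, f, hc, hX⟩ := hX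
  obtain ⟨hT, -, -, ⟨r, hr⟩, hf⟩ := bsCode_aleph0_iff.1 hc
  have := wellFoundedGT_of_bsCode hc
  rw [(isBorelStarAux_aleph0_iff hc hr).1 ⟨hc, hX⟩]
  exact gbBorel_codedSet hT hf r

lemma isBorelStar_of_mem_gBaireBasic (hκ : ℵ₀ ≤ κ) {N : Set (GBS κ)} (hN : N ∈ GBaireBasic κ) :
    IsBorelStar κ ℵ₀ N := by
  have hc : BSCode κ ℵ₀ Unit (fun _ => true) (fun _ => N) :=
    bsCode_aleph0_iff.2 ⟨by simpa using one_le_aleph0.trans hκ, fun c _ => c.toFinite,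
      fun _ => subsingleton_of_subsingleton.isChain, ⟨(), fun _ => le_rfl⟩, fun _ _ => hN⟩
  have := wellFoundedGT_of_bsCode hc
  refine ⟨Unit, _, _, _, (isBorelStarAux_aleph0_iff hc (r := ()) fun _ => le_rfl).2 ?_⟩
  rw [codedSet_of_isLeaf fun ⟨y, hy⟩ => hy.ne (Subsingleton.elim _ _)]

end Codes

section Join

variable {ι : Type} {S : ι → Type}

lemma mk_join_le {κ : Cardinal} (hκ : ℵ₀ ≤ κ) (hι : #ι ≤ κ) (hS : ∀ i, #(S i) ≤ κ) :
    #(WithBot (Σ i, S i)) ≤ κ := by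
  have hsum : #(Σ i, S i) ≤ κ := calc
    #(Σ i, S i) = sum fun i => #(S i) := mk_sigma _
    _ ≤ sum fun _ : ι => κ := sum_le_sum _ _ hS
    _ = #ι * κ := sum_const' _ _
    _ ≤ κ * κ := by gcongr
    _ = κ := mul_eq_self hκ
  calc #(WithBot (Σ i, S i)) = #(Σ i, S i) + 1 := mk_option
    _ ≤ κ + κ := add_le_add hsum (one_le_aleph0.trans hκ)
    _ = κ := add_eq_self hκ

variable [∀ i, PartialOrder (S i)]

def toJoin (i : ι) : S i ↪o WithBot (Σ i, S i) :=
  OrderEmbedding.ofMapLEIff (fun a => ((⟨i, a⟩ : Σ i, S i) : WithBot (Σ i, S i))) fun _ _ => by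
    rw [WithBot.coe_le_coe, Sigma.mk_le_mk_iff]

def joinFun {β : Type*} (b : β) (g : ∀ i, S i → β) : WithBot (Σ i, S i) → β :=
  WithBot.recBotCoe b fun p => g p.1 p.2

lemma eq_of_toJoin_le_toJoin {i j : ι} {a : S i} {b : S j} (h : toJoin i a ≤ toJoin j b) :
    i = j :=
  (Sigma.le_def.1 (WithBot.coe_le_coe.1 h)).1

lemma isUpperSet_range_toJoin (i : ι) : IsUpperSet (range (toJoin (S := S) i)) := by
  rintro _ y hay ⟨a, rfl⟩
  induction y using WithBot.recBotCoe with
  | bot => exact absurd hay (WithBot.not_coe_le_bot _)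
  | coe p =>
    obtain ⟨j, b⟩ := p
    obtain rfl := eq_of_toJoin_le_toJoin (b := b) hay
    exact ⟨b, rfl⟩

lemma exists_subset_insert_bot_image [Nonempty ι] {c : Set (WithBot (Σ i, S i))}
    (hc : IsChain (· ≤ ·) c) : ∃ i, c ⊆ insert ⊥ (toJoin i '' (toJoin i ⁻¹' c)) := by
  by_cases h : ∃ i a, toJoin i a ∈ c
  · obtain ⟨i, a, ha⟩ := h
    refine ⟨i, fun y hy => ?_⟩
    induction y using WithBot.recBotCoe with
    | bot => exact mem_insert _ _
    | coe p =>
      obtain ⟨j, b⟩ := p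
      obtain rfl : j = i := (hc.total hy ha).elim (eq_of_toJoin_le_toJoin (b := a))
        fun h => (eq_of_toJoin_le_toJoin (a := a) h).symm
      exact mem_insert_of_mem _ ⟨b, hy, rfl⟩
  · simp only [not_exists] at h
    refine ⟨Classical.arbitrary ι, fun y hy => ?_⟩
    induction y using WithBot.recBotCoe with
    | bot => exact mem_insert _ _
    | coe p => exact absurd hy (h p.1 p.2)

lemma chains_finite_join [Nonempty ι]
    (h : ∀ i, ∀ c : Set (S i), IsChain (· ≤ ·) c → c.Finite) (c : Set (WithBot (Σ i, S i)))
    (hc : IsChain (· ≤ ·) c) : c.Finite := by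
  obtain ⟨i, hi⟩ := exists_subset_insert_bot_image hc
  exact (((h i _ (hc.preimage_embedding (toJoin i))).image _).insert ⊥).subset hi

lemma isChain_Iio_join (h : ∀ i (a : S i), IsChain (· ≤ ·) (Iio a))
    (y : WithBot (Σ i, S i)) : IsChain (· ≤ ·) (Iio y) := by
  induction y using WithBot.recBotCoe with
  | bot => simp
  | coe p =>
    obtain ⟨i, a⟩ := p
    have hsub : Iio (toJoin i a) ⊆ insert ⊥ (toJoin i '' Iio a) := by
      intro z hz
      induction z using WithBot.recBotCoe with
      | bot => exact mem_insert _ _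
      | coe q =>
        obtain ⟨j, b⟩ := q
        obtain rfl := eq_of_toJoin_le_toJoin (a := b) (b := a) hz.le
        exact mem_insert_of_mem _ ⟨b, (toJoin j).lt_iff_lt.1 hz, rfl⟩
    exact (((h i a).image (toJoin i)).insert fun _ _ _ => .inl bot_le).mono hsub

lemma bot_covBy_join_iff [∀ i, OrderBot (S i)] {y : WithBot (Σ i, S i)} :
    ⊥ ⋖ y ↔ ∃ i, y = toJoin i ⊥ := by
  refine ⟨fun h => ?_, ?_⟩
  · induction y using WithBot.recBotCoe with
    | bot => exact absurd h.lt (lt_irrefl _)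
    | coe p =>
      obtain ⟨i, a⟩ := p
      refine ⟨i, congrArg (toJoin i) (by_contra fun ha => ?_)⟩
      exact h.2 (WithBot.bot_lt_coe _) ((toJoin i).lt_iff_lt.2 (bot_lt_iff_ne_bot.2 ha))
  · rintro ⟨i, rfl⟩
    refine WithBot.bot_covBy_coe.2 ?_
    rintro ⟨j, b⟩ hb
    obtain rfl := eq_of_toJoin_le_toJoin (a := b) (b := (⊥ : S i)) (WithBot.coe_le_coe.2 hb)
    exact Sigma.mk_le_mk_iff.2 bot_le

lemma not_isLeaf_bot_join [Nonempty ι] (h : ∀ i, Nonempty (S i)) :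
    ¬IsLeaf (⊥ : WithBot (Σ i, S i)) := fun hbot =>
  have i := Classical.arbitrary ι
  hbot ⟨toJoin i (h i).some, WithBot.bot_lt_coe _⟩

lemma codedSet_join_bot [Nonempty ι] [∀ i, OrderBot (S i)] [∀ i, WellFoundedGT (S i)]
    [WellFoundedGT (WithBot (Σ i, S i))] {α : Type*} (b : Bool) (N : Set α)
    (u : ∀ i, S i → Bool) (f : ∀ i, S i → Set α) :
    codedSet (joinFun b u) (joinFun N f) ⊥ =
      bif b then ⋃ i, codedSet (u i) (f i) ⊥ else ⋂ i, codedSet (u i) (f i) ⊥ := by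
  let φ : ι → {y : WithBot (Σ i, S i) // ⊥ ⋖ y} :=
    fun i => ⟨toJoin i ⊥, bot_covBy_join_iff.2 ⟨i, rfl⟩⟩
  have hφ : φ.Surjective := by
    rintro ⟨y, hy⟩
    obtain ⟨i, rfl⟩ := bot_covBy_join_iff.1 hy
    exact ⟨i, rfl⟩
  have hcomp (i : ι) : codedSet (joinFun b u) (joinFun N f) (φ i) = codedSet (u i) (f i) ⊥ :=
    (codedSet_comp (toJoin i) (isUpperSet_range_toJoin i) (joinFun b u) (joinFun N f) ⊥).symm
  rw [codedSet_of_not_isLeaf (not_isLeaf_bot_join fun _ => ⟨⊥⟩), ← hφ.iUnion_comp, ← hφ.iInter_comp]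
  simp only [hcomp]
  rfl

lemma bsCode_join {κ : Cardinal} (hκ : ℵ₀ ≤ κ) (hι : #ι ≤ κ) [Nonempty ι] (b : Bool)
    (N : Set (GBS κ)) {u : ∀ i, S i → Bool} {f : ∀ i, S i → Set (GBS κ)}
    (h : ∀ i, BSCode κ ℵ₀ (S i) (u i) (f i)) :
    BSCode κ ℵ₀ (WithBot (Σ i, S i)) (joinFun b u) (joinFun N f) := by
  have hc (i : ι) := bsCode_aleph0_iff.1 (h i)
  refine bsCode_aleph0_iff.2 ⟨mk_join_le hκ hι fun i => (hc i).1,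
    chains_finite_join fun i => (hc i).2.1, isChain_Iio_join fun i => (hc i).2.2.1,
    ⟨⊥, fun _ => bot_le⟩, fun y hy => ?_⟩
  induction y using WithBot.recBotCoe with
  | bot => exact absurd hy (not_isLeaf_bot_join fun i => (hc i).2.2.2.1.nonempty)
  | coe p =>
    exact (hc p.1).2.2.2.2 p.2 ((isLeaf_apply_iff (toJoin p.1) (isUpperSet_range_toJoin _)).1 hy)

lemma isBorelStar_join {κ : Cardinal} (hκ : ℵ₀ ≤ κ) (hι : #ι ≤ κ) [Nonempty ι] (b : Bool)
    {A : ι → Set (GBS κ)} (hA : ∀ i, IsBorelStar κ ℵ₀ (A i)) :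
    IsBorelStar κ ℵ₀ (bif b then ⋃ i, A i else ⋂ i, A i) := by
  choose S _ u f hS using hA
  choose r hr using fun i => (bsCode_aleph0_iff.1 (hS i).1).2.2.2.1
  let _ (i : ι) : OrderBot (S i) := { bot := r i, bot_le := hr i }
  have (i : ι) : WellFoundedGT (S i) := wellFoundedGT_of_bsCode (hS i).1
  -- the label `∅` of the new root is never read: the root is not a leaf
  have hJ := bsCode_join hκ hι b ∅ fun i => (hS i).1
  have := wellFoundedGT_of_bsCode hJ
  have hA (i : ι) : A i = codedSet (u i) (f i) ⊥ :=
    (isBorelStarAux_aleph0_iff (hS i).1 (hr i)).1 (hS i)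
  refine ⟨_, _, _, _, (isBorelStarAux_aleph0_iff hJ fun _ => bot_le).2 ?_⟩
  rw [codedSet_join_bot]
  simp only [hA]

end Join

section BasicSets

variable {κ : Cardinal}

lemma infinite_toType_ord (hκ : ℵ₀ ≤ κ) : Infinite κ.ord.ToType := by
  rw [infinite_iff, mk_toType, card_ord]
  exact hκ

lemma univ_mem_gBaireBasic (hκ : ℵ₀ ≤ κ) : (univ : Set (GBS κ)) ∈ GBaireBasic κ := by
  have := infinite_toType_ord hκ
  obtain ⟨m, -, hm⟩ := wellFounded_lt.has_min (univ : Set κ.ord.ToType) univ_nonempty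
  exact ⟨m, id, (eq_univ_of_forall fun _ i hi => absurd hi (hm i trivial)).symm⟩

lemma exists_disjoint_gBaireBasic (hκ : ℵ₀ ≤ κ) :
    ∃ N₀ ∈ GBaireBasic κ, ∃ N₁ ∈ GBaireBasic κ, Disjoint N₀ N₁ := by
  have := infinite_toType_ord hκ
  obtain ⟨a, b, hab⟩ := exists_pair_lt κ.ord.ToType
  exact ⟨_, ⟨b, fun _ => a, rfl⟩, _, ⟨b, fun _ => b, rfl⟩,
    disjoint_left.2 fun _ h₀ h₁ => hab.ne ((h₀ a hab).symm.trans (h₁ a hab))⟩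

lemma isBorelStar_empty (hκ : ℵ₀ ≤ κ) : IsBorelStar κ ℵ₀ (∅ : Set (GBS κ)) := by
  obtain ⟨N₀, h₀, N₁, h₁, hN⟩ := exists_disjoint_gBaireBasic hκ
  have hA (j : Bool) : IsBorelStar κ ℵ₀ (bif j then N₁ else N₀) :=
    isBorelStar_of_mem_gBaireBasic hκ (by cases j <;> assumption)
  have hinter : (⋂ j : Bool, bif j then N₁ else N₀) = ∅ := by
    rw [← hN.inter_eq]
    ext
    simp [Bool.forall_bool]
  have hBool : #Bool ≤ κ := by simpa using (natCast_lt_aleph0 (n := 2)).le.trans hκ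
  simpa [hinter] using isBorelStar_join hκ hBool false hA

end BasicSets

end BorelStar

open BorelStar

theorem stmt_16_general (κ : Cardinal) (hκ : ℵ₀ ≤ κ)
    (X : Set (GBS κ)) :
    GBBorel κ X ↔ IsBorelStar κ ℵ₀ X := by
  refine ⟨fun hX => ?_, IsBorelStar.gbBorel⟩
  induction hX with
  | basic N hN => exact isBorelStar_of_mem_gBaireBasic hκ hN
  | iUnion ι A hι _ ih =>
    cases isEmpty_or_nonempty ι
    · simpa using isBorelStar_empty hκ
    · exact isBorelStar_join hκ hι true ih
  | iInter ι A hι _ ih =>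
    cases isEmpty_or_nonempty ι
    · simpa using isBorelStar_of_mem_gBaireBasic hκ (univ_mem_gBaireBasic hκ)
    · exact isBorelStar_join hκ hι false ih

/-- `Borel(κ) = Borel*_ω(κ)`: a set is `Borel(κ)` iff it has a well-founded
`Borel*`-code (one whose tree has no infinite chains). -/
theorem stmt_16 (κ : Cardinal) (hκ : ℵ₀ ≤ κ) (h : κ ^< κ = κ)
    (X : Set (GBS κ)) :
    GBBorel κ X ↔ IsBorelStar κ ℵ₀ X :=
  stmt_16_general κ hκ X
end
end
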